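/- arXiv:1111.0810 — 13 statements merged into one kernel-verified Lean document; each statement's English description precedes it below -/
import Mathlib

section
/- Let n ≥ 1, let Y : ℝⁿ → ℝⁿ be a continuously differentiable vector field which is homothetic for the Euclidean metric with homothetic factor ψ ∈ ℝ, i.e. for all x ∈ ℝⁿ and all indices i,j one has ∂ᵢYⱼ(x) + ∂ⱼYᵢ(x) = 2ψ δᵢⱼ, let V : ℝⁿ → ℝ be continuously differentiable, and let p ∈ ℝ be such that ⟨Y(x), ∇V(x)⟩ + 2ψ V(x) + p = 0 for all x ∈ ℝⁿ. Then for every twice differentiable solution x : I → ℝⁿ of ẍ(t) = −∇V(x(t)) on an interval I, the function t ↦ 2ψ t E(t) − ⟨Y(x(t)), ẋ(t)⟩ + p t is constant on I, where E(t) = ½‖ẋ(t)‖² + V(x(t)). -/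
open scoped RealInnerProductSpace

lemma euclid_sum_single {n : ℕ} (v : EuclideanSpace ℝ (Fin n)) :
    v = ∑ i, v i • EuclideanSpace.single i (1:ℝ) := by
  ext j
  rw [WithLp.ofLp_sum, Finset.sum_apply]
  simp [EuclideanSpace.single_apply]

lemma homothetic_quadratic {n : ℕ} (Y : EuclideanSpace ℝ (Fin n) → EuclideanSpace ℝ (Fin n))
    (ψ : ℝ)
    (hhom : ∀ (x : EuclideanSpace ℝ (Fin n)) (i j : Fin n),
      fderiv ℝ Y x (EuclideanSpace.single i 1) j
        + fderiv ℝ Y x (EuclideanSpace.single j 1) i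
        = 2 * ψ * (if i = j then (1 : ℝ) else 0))
    (a v : EuclideanSpace ℝ (Fin n)) :
    ⟪fderiv ℝ Y a v, v⟫ = ψ * ‖v‖ ^ 2 := by
  set A : Fin n → EuclideanSpace ℝ (Fin n) :=
    fun i => fderiv ℝ Y a (EuclideanSpace.single i (1:ℝ)) with hA
  have hfd : fderiv ℝ Y a v = ∑ i, v i • A i := by
    conv_lhs => rw [euclid_sum_single v]
    simp [hA]
  have hinner : ⟪fderiv ℝ Y a v, v⟫ = ∑ j, ∑ i, v i * A i j * v j := by
    rw [hfd, PiLp.inner_apply]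
    refine Finset.sum_congr rfl fun j _ => ?_
    rw [WithLp.ofLp_sum, Finset.sum_apply]
    simp only [PiLp.smul_apply, smul_eq_mul, RCLike.inner_apply, conj_trivial]
    rw [mul_comm, Finset.sum_mul]
  have h2 : (2:ℝ) * ⟪fderiv ℝ Y a v, v⟫ = ∑ i, ∑ j, v i * v j * (A i j + A j i) := by
    rw [hinner]
    have hS1 : (∑ j, ∑ i, v i * A i j * v j) = ∑ i, ∑ j, v i * v j * A i j := by
      rw [Finset.sum_comm]
      exact Finset.sum_congr rfl fun i _ => Finset.sum_congr rfl fun j _ => by ring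
    have hS2 : (∑ j, ∑ i, v i * A i j * v j) = ∑ i, ∑ j, v i * v j * A j i := by
      exact Finset.sum_congr rfl fun j _ => Finset.sum_congr rfl fun i _ => by ring
    rw [two_mul]
    nth_rewrite 1 [hS1]
    nth_rewrite 1 [hS2]
    rw [← Finset.sum_add_distrib]
    refine Finset.sum_congr rfl fun i _ => ?_
    rw [← Finset.sum_add_distrib]
    exact Finset.sum_congr rfl fun j _ => by ring
  have h3 : ∑ i, ∑ j, v i * v j * (A i j + A j i) = 2 * ψ * ∑ i, v i ^ 2 := by
    rw [Finset.mul_sum]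
    refine Finset.sum_congr rfl fun i _ => ?_
    have hrw : ∀ j, v i * v j * (A i j + A j i) =
        v i * v j * (2 * ψ * (if i = j then (1:ℝ) else 0)) := by
      intro j; rw [hhom a i j]
    simp only [hrw]
    rw [Finset.sum_eq_single i]
    · simp; ring
    · intro j _ hj; simp [Ne.symm hj]
    · simp
  have hnorm : ‖v‖ ^ 2 = ∑ i, v i ^ 2 := by
    rw [← real_inner_self_eq_norm_sq, PiLp.inner_apply]
    simp [sq]
  rw [hnorm]
  linarith


/-- Noether integral of Case I (homothetic vector `Y` with factor `ψ`):
if `⟨Y, ∇V⟩ + 2ψV + p = 0`, then along any solution of `ẍ = -∇V(x)` the quantity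
`2ψ t E - ⟨Y(x), ẋ⟩ + p t` is constant. -/
theorem noether_integral_homothetic
    (n : ℕ) (hn : 1 ≤ n)
    (Y : EuclideanSpace ℝ (Fin n) → EuclideanSpace ℝ (Fin n))
    (hY : ContDiff ℝ 1 Y) (ψ : ℝ)
    (hhom : ∀ (x : EuclideanSpace ℝ (Fin n)) (i j : Fin n),
      fderiv ℝ Y x (EuclideanSpace.single i 1) j
        + fderiv ℝ Y x (EuclideanSpace.single j 1) i
        = 2 * ψ * (if i = j then (1 : ℝ) else 0))
    (V : EuclideanSpace ℝ (Fin n) → ℝ) (hV : ContDiff ℝ 1 V)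
    (p : ℝ)
    (hcond : ∀ x : EuclideanSpace ℝ (Fin n),
      ⟪Y x, gradient V x⟫ + 2 * ψ * V x + p = 0)
    (I : Set ℝ) (hI : I.OrdConnected)
    (x x' x'' : ℝ → EuclideanSpace ℝ (Fin n))
    (hx : ∀ t ∈ I, HasDerivAt x (x' t) t)
    (hx' : ∀ t ∈ I, HasDerivAt x' (x'' t) t)
    (heq : ∀ t ∈ I, x'' t = - gradient V (x t)) :
    ∀ t₁ ∈ I, ∀ t₂ ∈ I,
      2 * ψ * t₁ * ((1 / 2) * ‖x' t₁‖ ^ 2 + V (x t₁)) - ⟪Y (x t₁), x' t₁⟫ + p * t₁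
        = 2 * ψ * t₂ * ((1 / 2) * ‖x' t₂‖ ^ 2 + V (x t₂)) - ⟪Y (x t₂), x' t₂⟫ + p * t₂ := by
  set F : ℝ → ℝ := fun t =>
    2 * ψ * t * ((1 / 2) * ‖x' t‖ ^ 2 + V (x t)) - ⟪Y (x t), x' t⟫ + p * t with hF
  -- derivative of F is zero on I
  have hFderiv : ∀ t ∈ I, HasDerivAt F 0 t := by
    intro t ht
    have hxd := hx t ht
    have hx'd := hx' t ht
    -- energy derivative pieces
    have hVgrad : HasGradientAt V (gradient V (x t)) (x t) :=
      (hV.differentiable one_ne_zero (x t)).hasGradientAt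
    have hVd : HasDerivAt (fun s => V (x s)) ⟪gradient V (x t), x' t⟫ t := by
      have h := hVgrad.hasFDerivAt.comp_hasDerivAt t hxd
      exact h.congr_deriv (by simp)
    have hnd : HasDerivAt (fun s => (1/2 : ℝ) * ‖x' s‖ ^ 2)
        ((1/2) * (⟪x' t, x'' t⟫ + ⟪x'' t, x' t⟫)) t := by
      have h : HasDerivAt (fun s => ⟪x' s, x' s⟫)
          (⟪x' t, x'' t⟫ + ⟪x'' t, x' t⟫) t := hx'd.inner ℝ hx'd
      have h2 := h.const_mul (1/2 : ℝ)
      refine h2.congr_deriv rfl |>.congr_of_eventuallyEq ?_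
      filter_upwards with s
      rw [real_inner_self_eq_norm_sq]
    have hYc : HasDerivAt (fun s => Y (x s)) (fderiv ℝ Y (x t) (x' t)) t :=
      ((hY.differentiable one_ne_zero (x t)).hasFDerivAt).comp_hasDerivAt t hxd
    have hYd : HasDerivAt (fun s => ⟪Y (x s), x' s⟫)
        (⟪Y (x t), x'' t⟫ + ⟪fderiv ℝ Y (x t) (x' t), x' t⟫) t :=
      hYc.inner ℝ hx'd
    have hE : HasDerivAt (fun s => (1/2 : ℝ) * ‖x' s‖ ^ 2 + V (x s))
        ((1/2) * (⟪x' t, x'' t⟫ + ⟪x'' t, x' t⟫) + ⟪gradient V (x t), x' t⟫) t :=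
      hnd.add hVd
    have hid : HasDerivAt (fun s : ℝ => 2 * ψ * s) (2 * ψ) t := by
      simpa using (hasDerivAt_id t).const_mul (2 * ψ)
    have hprod := hid.mul hE
    have hpd : HasDerivAt (fun s : ℝ => p * s) p t := by
      simpa using (hasDerivAt_id t).const_mul p
    have hFd := (hprod.sub hYd).add hpd
    -- now show total derivative is zero
    have hzero :
        (2 * ψ * ((1/2 : ℝ) * ‖x' t‖ ^ 2 + V (x t))
            + 2 * ψ * t * ((1/2) * (⟪x' t, x'' t⟫ + ⟪x'' t, x' t⟫) + ⟪gradient V (x t), x' t⟫))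
          - (⟪Y (x t), x'' t⟫ + ⟪fderiv ℝ Y (x t) (x' t), x' t⟫) + p = 0 := by
      have h1 : ⟪x' t, x'' t⟫ = - ⟪gradient V (x t), x' t⟫ := by
        rw [heq t ht, inner_neg_right, real_inner_comm]
      have h2 : ⟪x'' t, x' t⟫ = - ⟪gradient V (x t), x' t⟫ := by
        rw [heq t ht, inner_neg_left]
      have h3 : ⟪Y (x t), x'' t⟫ = - ⟪Y (x t), gradient V (x t)⟫ := by
        rw [heq t ht, inner_neg_right]
      have h4 : ⟪fderiv ℝ Y (x t) (x' t), x' t⟫ = ψ * ‖x' t‖ ^ 2 :=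
        homothetic_quadratic Y ψ hhom (x t) (x' t)
      have h5 := hcond (x t)
      rw [h1, h2, h3, h4]
      ring_nf
      ring_nf at h5
      linarith
    rw [hzero] at hFd
    exact hFd
  -- constancy via MVT
  have key : ∀ a ∈ I, ∀ b ∈ I, a ≤ b → F b = F a := by
    intro a ha b hb hab
    have hsub : Set.Icc a b ⊆ I := hI.out ha hb
    have hcont : ContinuousOn F (Set.Icc a b) := fun s hs =>
      ((hFderiv s (hsub hs)).continuousAt).continuousWithinAt
    have hderiv : ∀ s ∈ Set.Ico a b, HasDerivWithinAt F 0 (Set.Ici s) s := fun s hs =>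
      (hFderiv s (hsub ⟨hs.1, le_of_lt hs.2⟩)).hasDerivWithinAt
    exact constant_of_has_deriv_right_zero hcont hderiv b ⟨hab, le_rfl⟩
  intro t₁ ht₁ t₂ ht₂
  rcases le_total t₁ t₂ with h | h
  · exact (key t₁ ht₁ t₂ ht₂ h).symm
  · exact key t₂ ht₂ t₁ ht₁ h
end

section
/- Let n ≥ 1, let H : ℝⁿ → ℝ be twice continuously differentiable with Hessian Hess H(x) = ψ·Id for all x (ψ ∈ ℝ constant), so that ∇H is a gradient homothetic (ψ ≠ 0) or gradient Killing (ψ = 0) vector of the Euclidean metric. Let m, p ∈ ℝ, let T : ℝ → ℝ satisfy T''(t) = m T(t), let S be an antiderivative of T, and let V : ℝⁿ → ℝ be continuously differentiable with ⟨∇H(x), ∇V(x)⟩ + 2ψ V(x) + m H(x) + p = 0 for all x ∈ ℝⁿ. Then for every twice differentiable solution x : I → ℝⁿ of ẍ(t) = −∇V(x(t)), the function t ↦ 2ψ S(t) E(t) − T(t)⟨∇H(x(t)), ẋ(t)⟩ + T'(t) H(x(t)) + p S(t) is constant on I, where E(t) = ½‖ẋ(t)‖² + V(x(t)). -/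
open scoped RealInnerProductSpace

/-- Noether integral of Case II (gradient homothetic vector `∇H`,
`Hess H = ψ·Id`): if `⟨∇H, ∇V⟩ + 2ψV + mH + p = 0` and `T'' = mT`, `S' = T`, then along
any solution of `ẍ = -∇V(x)` the quantity `2ψ S E - T⟨∇H(x), ẋ⟩ + T' H(x) + p S` is
constant. -/
theorem noether_integral_gradient_homothetic
    (n : ℕ) (hn : 1 ≤ n)
    (H : EuclideanSpace ℝ (Fin n) → ℝ) (hH : ContDiff ℝ 2 H) (ψ : ℝ)
    (hHess : ∀ (x u : EuclideanSpace ℝ (Fin n)),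
      fderiv ℝ (gradient H) x u = ψ • u)
    (m p : ℝ)
    (T T' T'' : ℝ → ℝ)
    (hT : ∀ t, HasDerivAt T (T' t) t)
    (hT' : ∀ t, HasDerivAt T' (T'' t) t)
    (hTm : ∀ t, T'' t = m * T t)
    (S : ℝ → ℝ) (hS : ∀ t, HasDerivAt S (T t) t)
    (V : EuclideanSpace ℝ (Fin n) → ℝ) (hV : ContDiff ℝ 1 V)
    (hcond : ∀ x : EuclideanSpace ℝ (Fin n),
      ⟪gradient H x, gradient V x⟫ + 2 * ψ * V x + m * H x + p = 0)
    (I : Set ℝ) (hI : I.OrdConnected)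
    (x x' x'' : ℝ → EuclideanSpace ℝ (Fin n))
    (hx : ∀ t ∈ I, HasDerivAt x (x' t) t)
    (hx' : ∀ t ∈ I, HasDerivAt x' (x'' t) t)
    (heq : ∀ t ∈ I, x'' t = - gradient V (x t)) :
    ∀ t₁ ∈ I, ∀ t₂ ∈ I,
      2 * ψ * S t₁ * ((1 / 2) * ‖x' t₁‖ ^ 2 + V (x t₁))
          - T t₁ * ⟪gradient H (x t₁), x' t₁⟫ + T' t₁ * H (x t₁) + p * S t₁
        = 2 * ψ * S t₂ * ((1 / 2) * ‖x' t₂‖ ^ 2 + V (x t₂))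
          - T t₂ * ⟪gradient H (x t₂), x' t₂⟫ + T' t₂ * H (x t₂) + p * S t₂ := by
  -- differentiability facts
  have hHdiff : Differentiable ℝ H := hH.differentiable (by norm_num)
  have hVdiff : Differentiable ℝ V := hV.differentiable (by norm_num)
  have hgradHdiff : Differentiable ℝ (gradient H) := by
    have h1 : ContDiff ℝ 1 (fderiv ℝ H) := hH.fderiv_right (by norm_num)
    exact fun y => ((InnerProductSpace.toDual ℝ
      (EuclideanSpace ℝ (Fin n))).symm.differentiable.comp (h1.differentiable (by norm_num))) y
  -- derivative of H ∘ x
  have hderivH : ∀ t ∈ I, HasDerivAt (fun t => H (x t)) ⟪gradient H (x t), x' t⟫ t := by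
    intro t ht
    have := ((hHdiff (x t)).hasGradientAt.hasFDerivAt).comp_hasDerivAt t (hx t ht)
    simpa [InnerProductSpace.toDual_apply_apply, Function.comp_def] using this
  -- derivative of V ∘ x
  have hderivV : ∀ t ∈ I, HasDerivAt (fun t => V (x t)) ⟪gradient V (x t), x' t⟫ t := by
    intro t ht
    have := ((hVdiff (x t)).hasGradientAt.hasFDerivAt).comp_hasDerivAt t (hx t ht)
    simpa [InnerProductSpace.toDual_apply_apply, Function.comp_def] using this
  -- derivative of gradient H ∘ x
  have hderivG : ∀ t ∈ I, HasDerivAt (fun t => gradient H (x t)) (ψ • x' t) t := by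
    intro t ht
    have := ((hgradHdiff (x t)).hasFDerivAt).comp_hasDerivAt t (hx t ht)
    simpa [hHess, Function.comp_def] using this
  -- derivative of ‖x'‖²
  have hnorm : ∀ t ∈ I, HasDerivAt (fun t => ‖x' t‖ ^ 2)
      (-(2 * ⟪gradient V (x t), x' t⟫)) t := by
    intro t ht
    have h := (hx' t ht).inner ℝ (hx' t ht)
    have h2 : (⟪x' t, x'' t⟫ + ⟪x'' t, x' t⟫ : ℝ) = -(2 * ⟪gradient V (x t), x' t⟫) := by
      rw [heq t ht, inner_neg_right, inner_neg_left, real_inner_comm (x' t)]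
      ring
    rw [h2] at h
    have : (fun t => (⟪x' t, x' t⟫ : ℝ)) = fun t => ‖x' t‖ ^ 2 := by
      funext s; exact real_inner_self_eq_norm_sq (x' s)
    rwa [this] at h
  -- derivative of ⟪∇H(x), x'⟫
  have hinner : ∀ t ∈ I, HasDerivAt (fun t => (⟪gradient H (x t), x' t⟫ : ℝ))
      (ψ * ‖x' t‖ ^ 2 - ⟪gradient H (x t), gradient V (x t)⟫) t := by
    intro t ht
    have h := (hderivG t ht).inner ℝ (hx' t ht)
    have h2 : (⟪gradient H (x t), x'' t⟫ + ⟪ψ • x' t, x' t⟫ : ℝ)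
        = ψ * ‖x' t‖ ^ 2 - ⟪gradient H (x t), gradient V (x t)⟫ := by
      rw [heq t ht, inner_neg_right, real_inner_smul_left, real_inner_self_eq_norm_sq]
      ring
    rwa [h2] at h
  -- the full integral has zero derivative on I
  set F : ℝ → ℝ := fun t =>
    2 * ψ * S t * ((1 / 2) * ‖x' t‖ ^ 2 + V (x t))
      - T t * ⟪gradient H (x t), x' t⟫ + T' t * H (x t) + p * S t with hF
  have hFderiv : ∀ t ∈ I, HasDerivAt F 0 t := by
    intro t ht
    have h1 := ((((hS t).const_mul (2 * ψ)).mul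
        (((hnorm t ht).const_mul ((1:ℝ)/2)).add (hderivV t ht))).sub
        ((hT t).mul (hinner t ht))).add
        (((hT' t).mul (hderivH t ht)).add ((hS t).const_mul p))
    have h2 : HasDerivAt F 0 t := by
      convert h1 using 2
      · rfl
      · rfl
      · simp only [hF]; funext s; simp only [Pi.mul_apply, Pi.add_apply, Pi.sub_apply]; ring
      · rw [hTm t]; simp only [Pi.add_apply]; linear_combination -(T t) * hcond (x t)
    exact h2
  -- conclude constancy via mean value inequality
  intro t₁ ht₁ t₂ ht₂
  have hconv : Convex ℝ I := by
    rw [convex_iff_ordConnected]; exact hI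
  have hbd : ∀ t ∈ I, HasFDerivWithinAt F ((0 : ℝ →L[ℝ] ℝ)) I t := by
    intro t ht
    have h := (hFderiv t ht).hasFDerivAt.hasFDerivWithinAt (s := I)
    have e : (ContinuousLinearMap.toSpanSingleton ℝ (0 : ℝ)) = 0 := by
      ext; simp
    rwa [e] at h
  have hle := hconv.norm_image_sub_le_of_norm_hasFDerivWithin_le
    (f' := fun _ => (0 : ℝ →L[ℝ] ℝ)) (C := 0) hbd (fun t ht => by simp) ht₂ ht₁
  have hFF : F t₁ = F t₂ := by
    have h0 : ‖F t₁ - F t₂‖ = 0 := le_antisymm (by simpa using hle) (norm_nonneg _)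
    exact sub_eq_zero.mp (norm_eq_zero.mp h0)
  simpa [hF] using hFF
end

section
/- Let V : ℝ³ → ℝ be continuously differentiable and p ∈ ℝ with x₂ ∂V/∂x₁(x) − x₁ ∂V/∂x₂(x) + p = 0 for all x ∈ ℝ³. Then for every twice differentiable solution x : I → ℝ³ of ẍ(t) = −∇V(x(t)), the function t ↦ −(x₂(t)ẋ₁(t) − x₁(t)ẋ₂(t)) + p t is constant on I. -/
open scoped RealInnerProductSpace

lemma grad_coord_aux (V : EuclideanSpace ℝ (Fin 3) → ℝ) (y : EuclideanSpace ℝ (Fin 3)) (i : Fin 3) :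
    gradient V y i = fderiv ℝ V y (EuclideanSpace.single i 1) := by
  have h : ⟪gradient V y, EuclideanSpace.single i (1:ℝ)⟫ = fderiv ℝ V y (EuclideanSpace.single i 1) := by
    rw [gradient]
    exact InnerProductSpace.toDual_symm_apply
  rw [← h, EuclideanSpace.inner_single_right]
  simp

/-- if `x₂ ∂V/∂x₁ - x₁ ∂V/∂x₂ + p = 0` everywhere, then along any solution
of `ẍ = -∇V(x)` in `ℝ³` the quantity `-(x₂ẋ₁ - x₁ẋ₂) + p t` is constant. -/
theorem noether_integral_rotation
    (V : EuclideanSpace ℝ (Fin 3) → ℝ) (hV : ContDiff ℝ 1 V)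
    (p : ℝ)
    (hcond : ∀ y : EuclideanSpace ℝ (Fin 3),
      y 1 * fderiv ℝ V y (EuclideanSpace.single 0 1)
        - y 0 * fderiv ℝ V y (EuclideanSpace.single 1 1) + p = 0)
    (I : Set ℝ) (hI : I.OrdConnected)
    (x x' x'' : ℝ → EuclideanSpace ℝ (Fin 3))
    (hx : ∀ t ∈ I, HasDerivAt x (x' t) t)
    (hx' : ∀ t ∈ I, HasDerivAt x' (x'' t) t)
    (heq : ∀ t ∈ I, x'' t = - gradient V (x t)) :
    ∀ t₁ ∈ I, ∀ t₂ ∈ I,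
      -(x t₁ 1 * x' t₁ 0 - x t₁ 0 * x' t₁ 1) + p * t₁
        = -(x t₂ 1 * x' t₂ 0 - x t₂ 0 * x' t₂ 1) + p * t₂ := by
  set F : ℝ → ℝ := fun t => -(x t 1 * x' t 0 - x t 0 * x' t 1) + p * t with hF
  have key : ∀ t ∈ I, HasDerivAt F 0 t := by
    intro t ht
    have hc : ∀ i : Fin 3, HasDerivAt (fun s => x s i) (x' t i) t := fun i =>
      ((EuclideanSpace.proj (𝕜 := ℝ) i).hasFDerivAt.comp_hasDerivAt t (hx t ht))
    have hc' : ∀ i : Fin 3, HasDerivAt (fun s => x' s i) (x'' t i) t := fun i =>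
      ((EuclideanSpace.proj (𝕜 := ℝ) i).hasFDerivAt.comp_hasDerivAt t (hx' t ht))
    have hD : HasDerivAt F
        (-((x' t 1 * x' t 0 + x t 1 * x'' t 0) - (x' t 0 * x' t 1 + x t 0 * x'' t 1)) + p * 1) t := by
      exact ((((hc 1).mul (hc' 0)).sub ((hc 0).mul (hc' 1))).neg).add
        ((hasDerivAt_id t).const_mul p)
    have hg0 : x'' t 0 = -fderiv ℝ V (x t) (EuclideanSpace.single 0 1) := by
      rw [heq t ht]; simp [← grad_coord_aux V (x t) 0]
    have hg1 : x'' t 1 = -fderiv ℝ V (x t) (EuclideanSpace.single 1 1) := by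
      rw [heq t ht]; simp [← grad_coord_aux V (x t) 1]
    have hz : (-((x' t 1 * x' t 0 + x t 1 * x'' t 0) - (x' t 0 * x' t 1 + x t 0 * x'' t 1)) + p * 1) = 0 := by
      have := hcond (x t)
      rw [hg0, hg1]; ring_nf; ring_nf at this; linarith
    rwa [hz] at hD
  intro t₁ ht₁ t₂ ht₂
  have hconv : Convex ℝ I := hI.convex
  have := hconv.norm_image_sub_le_of_norm_hasDerivWithin_le
    (f := F) (f' := fun _ => (0:ℝ)) (C := 0)
    (fun s hs => (key s hs).hasDerivWithinAt) (fun s _ => by simp) ht₂ ht₁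
  have h0 : ‖F t₁ - F t₂‖ ≤ 0 := by simpa using this
  have : F t₁ = F t₂ := by
    have := norm_le_zero_iff.mp h0
    linarith [sub_eq_zero.mp this]
  simpa [hF] using this
end

section
/- Let m, p ∈ ℝ, let V : ℝ³ → ℝ be continuously differentiable with ∂V/∂x₁(x) = −m x₁ − p for all x ∈ ℝ³ (equivalently V(x) = −(m/2)x₁² − p x₁ + f(x₂,x₃)), let T : ℝ → ℝ satisfy T''(t) = m T(t), and let S be an antiderivative of T. Then for every twice differentiable solution x : I → ℝ³ of ẍ(t) = −∇V(x(t)), the function t ↦ −T(t)ẋ₁(t) + T'(t)x₁(t) + p S(t) is constant on I. -/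
open scoped RealInnerProductSpace

/-- if `∂V/∂x₁ = -m x₁ - p` everywhere, `T'' = mT` and `S' = T`, then along
any solution of `ẍ = -∇V(x)` in `ℝ³` the quantity `-T ẋ₁ + T' x₁ + p S` is constant. -/
theorem noether_integral_gradient_KV_translation
    (m p : ℝ)
    (V : EuclideanSpace ℝ (Fin 3) → ℝ) (hV : ContDiff ℝ 1 V)
    (hpartial : ∀ y : EuclideanSpace ℝ (Fin 3),
      fderiv ℝ V y (EuclideanSpace.single 0 1) = -m * y 0 - p)
    (T T' T'' : ℝ → ℝ)
    (hT : ∀ t, HasDerivAt T (T' t) t)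
    (hT' : ∀ t, HasDerivAt T' (T'' t) t)
    (hTm : ∀ t, T'' t = m * T t)
    (S : ℝ → ℝ) (hS : ∀ t, HasDerivAt S (T t) t)
    (I : Set ℝ) (hI : I.OrdConnected)
    (x x' x'' : ℝ → EuclideanSpace ℝ (Fin 3))
    (hx : ∀ t ∈ I, HasDerivAt x (x' t) t)
    (hx' : ∀ t ∈ I, HasDerivAt x' (x'' t) t)
    (heq : ∀ t ∈ I, x'' t = - gradient V (x t)) :
    ∀ t₁ ∈ I, ∀ t₂ ∈ I,
      -(T t₁) * x' t₁ 0 + T' t₁ * x t₁ 0 + p * S t₁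
        = -(T t₂) * x' t₂ 0 + T' t₂ * x t₂ 0 + p * S t₂ := by
  -- the gradient's first component
  have hgrad : ∀ y : EuclideanSpace ℝ (Fin 3), gradient V y 0 = -m * y 0 - p := by
    intro y
    have h1 : ⟪gradient V y, EuclideanSpace.single (0 : Fin 3) (1 : ℝ)⟫
        = fderiv ℝ V y (EuclideanSpace.single 0 1) := by
      unfold gradient
      exact InnerProductSpace.toDual_symm_apply
    rw [EuclideanSpace.inner_single_right, hpartial y] at h1
    simpa using h1
  set F : ℝ → ℝ := fun t => -(T t) * x' t 0 + T' t * x t 0 + p * S t with hF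
  -- F has derivative 0 on I
  have hderiv : ∀ t ∈ I, HasDerivAt F 0 t := by
    intro t ht
    have hxc : HasDerivAt (fun s => x s 0) (x' t 0) t := by
      have := (EuclideanSpace.proj (0 : Fin 3)).hasFDerivAt.comp_hasDerivAt t (hx t ht)
      exact this
    have hx'c : HasDerivAt (fun s => x' s 0) (x'' t 0) t := by
      have := (EuclideanSpace.proj (0 : Fin 3)).hasFDerivAt.comp_hasDerivAt t (hx' t ht)
      exact this
    have h1 : HasDerivAt (fun s => -(T s) * x' s 0)
        (-(T' t) * x' t 0 + -(T t) * x'' t 0) t := ((hT t).neg).mul hx'c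
    have h2 : HasDerivAt (fun s => T' s * x s 0)
        (T'' t * x t 0 + T' t * x' t 0) t := (hT' t).mul hxc
    have h3 : HasDerivAt (fun s => p * S s) (p * T t) t := (hS t).const_mul p
    have := (h1.add h2).add h3
    have hx''0 : x'' t 0 = m * x t 0 + p := by
      have := heq t ht
      have h0 : x'' t 0 = -(gradient V (x t) 0) := by rw [this]; rfl
      rw [hgrad (x t)] at h0; linarith
    have hzero : -(T' t) * x' t 0 + -(T t) * x'' t 0 + (T'' t * x t 0 + T' t * x' t 0)
        + p * T t = 0 := by
      rw [hx''0, hTm t]; ring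
    rw [hzero] at this
    exact this
  intro t₁ ht₁ t₂ ht₂
  have main : ∀ a ∈ I, ∀ b ∈ I, a ≤ b → F a = F b := by
    intro a ha b hb hab
    have hsub : Set.Icc a b ⊆ I := hI.out ha hb
    have hcont : ContinuousOn F (Set.Icc a b) := fun s hs =>
      ((hderiv s (hsub hs)).continuousAt).continuousWithinAt
    have := constant_of_has_deriv_right_zero hcont (fun s hs =>
      ((hderiv s (hsub (Set.Ico_subset_Icc_self hs))).hasDerivWithinAt))
    exact (this b (Set.right_mem_Icc.2 hab)).symm
  rcases le_total t₁ t₂ with h | h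
  · exact main t₁ ht₁ t₂ ht₂ h
  · exact (main t₂ ht₂ t₁ ht₁ h).symm
end

section
/- Let m, p ∈ ℝ, let V : ℝ³ → ℝ be continuously differentiable with ⟨x, ∇V(x)⟩ + 2V(x) + (m/2)‖x‖² + p = 0 for all x ∈ ℝ³, let T : ℝ → ℝ satisfy T''(t) = m T(t), and let S be an antiderivative of T. Then for every twice differentiable solution x : I → ℝ³ of ẍ(t) = −∇V(x(t)), the function t ↦ 2S(t)E(t) − T(t)⟨x(t), ẋ(t)⟩ + ½T'(t)‖x(t)‖² + p S(t) is constant on I, where E(t) = ½‖ẋ(t)‖² + V(x(t)). -/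
open scoped RealInnerProductSpace

/-- if `⟨x, ∇V(x)⟩ + 2V(x) + (m/2)‖x‖² + p = 0` everywhere, `T'' = mT` and
`S' = T`, then along any solution of `ẍ = -∇V(x)` in `ℝ³` the quantity
`2SE - T⟨x, ẋ⟩ + ½T'‖x‖² + pS` is constant, where `E = ½‖ẋ‖² + V(x)`. -/
theorem noether_integral_gradient_homothety_R3
    (m p : ℝ)
    (V : EuclideanSpace ℝ (Fin 3) → ℝ) (hV : ContDiff ℝ 1 V)
    (hcond : ∀ y : EuclideanSpace ℝ (Fin 3),
      ⟪y, gradient V y⟫ + 2 * V y + (m / 2) * ‖y‖ ^ 2 + p = 0)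
    (T T' T'' : ℝ → ℝ)
    (hT : ∀ t, HasDerivAt T (T' t) t)
    (hT' : ∀ t, HasDerivAt T' (T'' t) t)
    (hTm : ∀ t, T'' t = m * T t)
    (S : ℝ → ℝ) (hS : ∀ t, HasDerivAt S (T t) t)
    (I : Set ℝ) (hI : I.OrdConnected)
    (x x' x'' : ℝ → EuclideanSpace ℝ (Fin 3))
    (hx : ∀ t ∈ I, HasDerivAt x (x' t) t)
    (hx' : ∀ t ∈ I, HasDerivAt x' (x'' t) t)
    (heq : ∀ t ∈ I, x'' t = - gradient V (x t)) :
    ∀ t₁ ∈ I, ∀ t₂ ∈ I,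
      2 * S t₁ * ((1 / 2) * ‖x' t₁‖ ^ 2 + V (x t₁)) - T t₁ * ⟪x t₁, x' t₁⟫
          + (1 / 2) * T' t₁ * ‖x t₁‖ ^ 2 + p * S t₁
        = 2 * S t₂ * ((1 / 2) * ‖x' t₂‖ ^ 2 + V (x t₂)) - T t₂ * ⟪x t₂, x' t₂⟫
          + (1 / 2) * T' t₂ * ‖x t₂‖ ^ 2 + p * S t₂ := by
  set F : ℝ → ℝ := fun t =>
    2 * S t * ((1 / 2) * ‖x' t‖ ^ 2 + V (x t)) - T t * ⟪x t, x' t⟫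
      + (1 / 2) * T' t * ‖x t‖ ^ 2 + p * S t with hF
  have key : ∀ t ∈ I, HasDerivAt F 0 t := by
    intro t ht
    have hgV : HasGradientAt V (gradient V (x t)) (x t) :=
      (hV.differentiable one_ne_zero (x t)).hasGradientAt
    have hVx : HasDerivAt (fun s => V (x s)) ⟪gradient V (x t), x' t⟫ t := by
      have := (hgV.hasFDerivAt.comp_hasDerivAt t (hx t ht))
      exact this
    have hn' : HasDerivAt (fun s => ‖x' s‖ ^ 2)
        (⟪x' t, x'' t⟫ + ⟪x'' t, x' t⟫) t := by
      have := (hx' t ht).inner ℝ (hx' t ht)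
      simp only [← @real_inner_self_eq_norm_sq]
      exact this
    have hn : HasDerivAt (fun s => ‖x s‖ ^ 2)
        (⟪x t, x' t⟫ + ⟪x' t, x t⟫) t := by
      have := (hx t ht).inner ℝ (hx t ht)
      simp only [← @real_inner_self_eq_norm_sq]
      exact this
    have hip : HasDerivAt (fun s => ⟪x s, x' s⟫)
        (⟪x t, x'' t⟫ + ⟪x' t, x' t⟫) t := (hx t ht).inner ℝ (hx' t ht)
    have hder :
        HasDerivAt F
          (2 * T t * ((1 / 2) * ‖x' t‖ ^ 2 + V (x t))
            + 2 * S t * ((1 / 2) * (⟪x' t, x'' t⟫ + ⟪x'' t, x' t⟫) + ⟪gradient V (x t), x' t⟫)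
            - (T' t * ⟪x t, x' t⟫ + T t * (⟪x t, x'' t⟫ + ⟪x' t, x' t⟫))
            + ((1 / 2) * T'' t * ‖x t‖ ^ 2 + (1 / 2) * T' t * (⟪x t, x' t⟫ + ⟪x' t, x t⟫))
            + p * T t) t := by
      refine ((((((hS t).const_mul 2).mul (((hn'.const_mul (1/2)).add hVx))).sub
        ((hT t).mul hip)).add (((hT' t).const_mul (1/2)).mul hn)).add ((hS t).const_mul p)) |>.congr_deriv ?_
      simp only [Pi.add_apply]
    convert hder using 1
    have ha := heq t ht
    have hc := hcond (x t)
    rw [ha, hTm t]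
    simp only [inner_neg_left, inner_neg_right]
    rw [real_inner_comm (gradient V (x t)) (x' t), real_inner_comm (x' t) (x t)]
    rw [real_inner_self_eq_norm_sq]
    linear_combination (-(T t)) * hc
  intro t₁ ht₁ t₂ ht₂
  have hconv : Convex ℝ I := by rwa [convex_iff_ordConnected]
  have := hconv.norm_image_sub_le_of_norm_hasDerivWithin_le
    (f := F) (f' := fun _ => (0:ℝ)) (C := 0)
    (fun s hs => (key s hs).hasDerivWithinAt) (by simp) ht₁ ht₂
  simp only [norm_zero, zero_mul, norm_le_zero_iff, sub_eq_zero] at this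
  exact this.symm
end

section
/- Let d ∈ ℝ, let e₁ = (1,0,0), and let F : ℝ³ → ℝ³ satisfy F(x + c e₁) = e^{−dc} F(x) for all c ∈ ℝ and all x ∈ ℝ³. If x : I → ℝ³ is a twice differentiable solution of ẍ(t) = F(x(t)), then for every ε ∈ ℝ the curve y(t) = x(e^{−dε/2} t) + ε e₁, defined for those t with e^{−dε/2}t ∈ I, is also a solution of ÿ(t) = F(y(t)). -/
/-- if `F(x + c e₁) = e^(-dc) F(x)` for all `c`, then for any solution of
`ẍ = F(x)` on an interval `I` and any `ε`, the curve `y(t) = x(e^(-dε/2) t) + ε e₁` is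
again a solution. -/
theorem lie_symmetry_translation_scaling
    (d : ℝ) (F : EuclideanSpace ℝ (Fin 3) → EuclideanSpace ℝ (Fin 3))
    (hF : ∀ (c : ℝ) (x : EuclideanSpace ℝ (Fin 3)),
      F (x + c • EuclideanSpace.single (0 : Fin 3) (1 : ℝ))
        = Real.exp (-d * c) • F x)
    (I : Set ℝ) (hI : I.OrdConnected)
    (x x' x'' : ℝ → EuclideanSpace ℝ (Fin 3))
    (hx : ∀ t ∈ I, HasDerivAt x (x' t) t)
    (hx' : ∀ t ∈ I, HasDerivAt x' (x'' t) t)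
    (heq : ∀ t ∈ I, x'' t = F (x t))
    (ε : ℝ) :
    ∃ y' y'' : ℝ → EuclideanSpace ℝ (Fin 3),
      ∀ t : ℝ, Real.exp (-d * ε / 2) * t ∈ I →
        HasDerivAt
          (fun s => x (Real.exp (-d * ε / 2) * s)
            + ε • EuclideanSpace.single (0 : Fin 3) (1 : ℝ)) (y' t) t ∧
        HasDerivAt y' (y'' t) t ∧
        y'' t = F (x (Real.exp (-d * ε / 2) * t)
          + ε • EuclideanSpace.single (0 : Fin 3) (1 : ℝ)) := by

  set c := Real.exp (-d * ε / 2) with hc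
  refine ⟨fun t => c • x' (c * t), fun t => (c * c) • x'' (c * t), fun t ht => ?_⟩
  have hmul : ∀ s : ℝ, HasDerivAt (fun u : ℝ => c * u) c s := by
    intro s
    simpa using (hasDerivAt_id s).const_mul c
  constructor
  · have := ((hx (c * t) ht).scomp t (hmul t)).add_const
      (ε • EuclideanSpace.single (0 : Fin 3) (1 : ℝ))
    simpa using this
  constructor
  · have h1 := (hx' (c * t) ht).scomp t (hmul t)
    have : HasDerivAt (fun s => c • x' (c * s)) (c • c • x'' (c * t)) t :=
      (h1.const_smul c)
    simpa [smul_smul] using this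
  · show (c * c) • x'' (c * t) = _
    rw [heq (c * t) ht, hF ε]
    have : c * c = Real.exp (-d * ε) := by
      rw [hc, ← Real.exp_add]; ring_nf
    rw [this]
end

section
/- Let F : ℝ³ \ {0} → ℝ³ satisfy F(λx) = λ^{−3} F(x) for all λ > 0 and x ≠ 0, and let x : I → ℝ³ \ {0} be a twice differentiable solution of ẍ(t) = F(x(t)). Then for every s ∈ ℝ, the curve y(t) = (1 + s t) x(t/(1 + s t)), defined on the set of t with 1 + st > 0 and t/(1+st) ∈ I, is also a solution of ÿ(t) = F(y(t)). -/
/-- if `F(λx) = λ⁻³ F(x)` for all `λ > 0` and `x ≠ 0` (Kepler–Ermakov type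
homogeneity), then for any nowhere-vanishing solution of `ẍ = F(x)` on an interval `I`
and any `s : ℝ`, the curve `y(t) = (1 + st) x(t/(1 + st))` is again a solution on the set
where `1 + st > 0` and `t/(1 + st) ∈ I`. -/
theorem lie_symmetry_sl2_special_conformal
    (F : EuclideanSpace ℝ (Fin 3) → EuclideanSpace ℝ (Fin 3))
    (hF : ∀ lam : ℝ, 0 < lam → ∀ x : EuclideanSpace ℝ (Fin 3), x ≠ 0 →
      F (lam • x) = (lam ^ (-3 : ℤ)) • F x)
    (I : Set ℝ) (hI : I.OrdConnected)
    (x x' x'' : ℝ → EuclideanSpace ℝ (Fin 3))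
    (hx0 : ∀ t ∈ I, x t ≠ 0)
    (hx : ∀ t ∈ I, HasDerivAt x (x' t) t)
    (hx' : ∀ t ∈ I, HasDerivAt x' (x'' t) t)
    (heq : ∀ t ∈ I, x'' t = F (x t))
    (s : ℝ) :
    ∃ y' y'' : ℝ → EuclideanSpace ℝ (Fin 3),
      ∀ t : ℝ, 0 < 1 + s * t → t / (1 + s * t) ∈ I →
        HasDerivAt (fun u => (1 + s * u) • x (u / (1 + s * u))) (y' t) t ∧
        HasDerivAt y' (y'' t) t ∧
        y'' t = F ((1 + s * t) • x (t / (1 + s * t))) := by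
  set τ : ℝ → ℝ := fun u => u / (1 + s * u) with hτdef
  refine ⟨fun t => s • x (τ t) + (1 + s * t)⁻¹ • x' (τ t),
    fun t => ((1 + s * t) ^ 3)⁻¹ • x'' (τ t), ?_⟩
  intro t hpos hmem
  have hne : (1 : ℝ) + s * t ≠ 0 := ne_of_gt hpos
  -- derivative of τ at t
  have hden : HasDerivAt (fun u : ℝ => 1 + s * u) s t := by
    simpa using ((hasDerivAt_id t).const_mul s).const_add 1
  have hτ : HasDerivAt τ (((1 + s * t) ^ 2)⁻¹) t := by
    have := (hasDerivAt_id t).div hden hne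
    refine this.congr_deriv ?_
    simp only [id]
    field_simp
    ring
  have hxc : HasDerivAt (fun u => x (τ u)) (((1 + s * t) ^ 2)⁻¹ • x' (τ t)) t :=
    (hx _ hmem).scomp t hτ
  have hx'c : HasDerivAt (fun u => x' (τ u)) (((1 + s * t) ^ 2)⁻¹ • x'' (τ t)) t :=
    (hx' _ hmem).scomp t hτ
  have hinv : HasDerivAt (fun u : ℝ => (1 + s * u)⁻¹) (-s / (1 + s * t) ^ 2) t :=
    hden.inv hne
  refine ⟨?_, ?_, ?_⟩
  · have := hden.smul hxc
    refine this.congr_deriv ?_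
    rw [smul_smul]
    match_scalars <;> field_simp <;> ring
  · have := (hxc.const_smul s).add (hinv.smul hx'c)
    refine this.congr_deriv ?_
    match_scalars <;> field_simp <;> ring
  · show ((1 + s * t) ^ 3)⁻¹ • x'' (t / (1 + s * t)) = F ((1 + s * t) • x (t / (1 + s * t)))
    rw [heq _ hmem, hF _ hpos _ (hx0 _ hmem)]
    norm_num [zpow_neg]
end

section
/- Let m ∈ ℝ, e₁ = (1,0,0), and let F : ℝ³ → ℝ³ satisfy F(x + c e₁) = F(x) + m c e₁ for all c ∈ ℝ and all x ∈ ℝ³ (i.e. F₁(x) = m x₁ + g(x₂,x₃) and F₂, F₃ are independent of x₁). Let T : ℝ → ℝ satisfy T''(t) = m T(t). If x : I → ℝ³ is a twice differentiable solution of ẍ(t) = F(x(t)), then the curve y(t) = x(t) + T(t) e₁ is also a solution of ÿ(t) = F(y(t)). -/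
/-- if `F(x + c e₁) = F(x) + mc e₁` for all `c` and `T'' = mT`, then for
any solution of `ẍ = F(x)` on an interval `I`, the curve `y(t) = x(t) + T(t) e₁` is
again a solution. -/
theorem lie_symmetry_oscillator_translation
    (m : ℝ) (F : EuclideanSpace ℝ (Fin 3) → EuclideanSpace ℝ (Fin 3))
    (hF : ∀ (c : ℝ) (x : EuclideanSpace ℝ (Fin 3)),
      F (x + c • EuclideanSpace.single (0 : Fin 3) (1 : ℝ))
        = F x + (m * c) • EuclideanSpace.single (0 : Fin 3) (1 : ℝ))
    (T T' T'' : ℝ → ℝ)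
    (hT : ∀ t, HasDerivAt T (T' t) t)
    (hT' : ∀ t, HasDerivAt T' (T'' t) t)
    (hTm : ∀ t, T'' t = m * T t)
    (I : Set ℝ) (hI : I.OrdConnected)
    (x x' x'' : ℝ → EuclideanSpace ℝ (Fin 3))
    (hx : ∀ t ∈ I, HasDerivAt x (x' t) t)
    (hx' : ∀ t ∈ I, HasDerivAt x' (x'' t) t)
    (heq : ∀ t ∈ I, x'' t = F (x t)) :
    ∃ y' y'' : ℝ → EuclideanSpace ℝ (Fin 3),
      ∀ t ∈ I,
        HasDerivAt
          (fun s => x s + T s • EuclideanSpace.single (0 : Fin 3) (1 : ℝ)) (y' t) t ∧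
        HasDerivAt y' (y'' t) t ∧
        y'' t = F (x t + T t • EuclideanSpace.single (0 : Fin 3) (1 : ℝ)) := by
  refine ⟨fun t => x' t + T' t • EuclideanSpace.single (0 : Fin 3) (1 : ℝ),
          fun t => x'' t + T'' t • EuclideanSpace.single (0 : Fin 3) (1 : ℝ),
          fun t ht => ⟨?_, ?_, ?_⟩⟩
  · exact (hx t ht).add ((hT t).smul_const _)
  · exact (hx' t ht).add ((hT' t).smul_const _)
  · simp only [hF (T t) (x t), heq t ht, hTm t]
end

section
/- Let W : ℝ → ℝ be continuously differentiable, let V(θ,φ) = W(cos θ sin φ), and let (φ, θ) : I → ℝ² be twice differentiable with sin φ(t) ≠ 0, satisfying φ̈ − sin φ cos φ · θ̇² + ∂V/∂φ = 0 and θ̈ + 2(cos φ/sin φ)·θ̇ φ̇ + (1/sin²φ)·∂V/∂θ = 0. Then the function I₁(t) = φ̇ sin θ + θ̇ cos θ sin φ cos φ is constant on I. -/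
open Real

/-- for the potential `V(θ,φ) = W(cos θ sin φ)` on the 2-sphere, the
Noether integral `I₁ = φ̇ sin θ + θ̇ cos θ sin φ cos φ` is conserved. -/
theorem sphere_integral_CK1
    (W : ℝ → ℝ) (hW : ContDiff ℝ 1 W)
    (I : Set ℝ) (hI : I.OrdConnected)
    (φ θ φ' θ' φ'' θ'' : ℝ → ℝ)
    (hφ : ∀ t ∈ I, HasDerivAt φ (φ' t) t)
    (hθ : ∀ t ∈ I, HasDerivAt θ (θ' t) t)
    (hφ' : ∀ t ∈ I, HasDerivAt φ' (φ'' t) t)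
    (hθ' : ∀ t ∈ I, HasDerivAt θ' (θ'' t) t)
    (hsin : ∀ t ∈ I, sin (φ t) ≠ 0)
    (heq1 : ∀ t ∈ I,
      φ'' t - sin (φ t) * cos (φ t) * (θ' t) ^ 2
        + deriv (fun u => W (cos (θ t) * sin u)) (φ t) = 0)
    (heq2 : ∀ t ∈ I,
      θ'' t + 2 * (cos (φ t) / sin (φ t)) * θ' t * φ' t
        + (1 / sin (φ t) ^ 2) * deriv (fun u => W (cos u * sin (φ t))) (θ t) = 0) :
    ∀ t₁ ∈ I, ∀ t₂ ∈ I,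
      φ' t₁ * sin (θ t₁) + θ' t₁ * cos (θ t₁) * sin (φ t₁) * cos (φ t₁)
        = φ' t₂ * sin (θ t₂) + θ' t₂ * cos (θ t₂) * sin (φ t₂) * cos (φ t₂) := by
  have hWd : ∀ x : ℝ, HasDerivAt W (deriv W x) x := fun x =>
    ((hW.differentiable one_ne_zero) x).hasDerivAt
  set g : ℝ → ℝ := fun t =>
    φ' t * sin (θ t) + θ' t * cos (θ t) * sin (φ t) * cos (φ t) with hg
  have key : ∀ t ∈ I, HasDerivAt g 0 t := by
    intro t ht
    have ha := hφ t ht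
    have hb := hθ t ht
    have ha' := hφ' t ht
    have hb' := hθ' t ht
    have hs := hsin t ht
    have hV1 : deriv (fun u => W (cos (θ t) * sin u)) (φ t)
        = deriv W (cos (θ t) * sin (φ t)) * (cos (θ t) * cos (φ t)) := by
      exact ((hWd _).comp _ ((Real.hasDerivAt_sin (φ t)).const_mul (cos (θ t)))).deriv
    have hV2 : deriv (fun u => W (cos u * sin (φ t))) (θ t)
        = deriv W (cos (θ t) * sin (φ t)) * (-sin (θ t) * sin (φ t)) := by
      exact ((hWd _).comp _ ((Real.hasDerivAt_cos (θ t)).mul_const (sin (φ t)))).deriv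
    have h1 := heq1 t ht
    have h2 := heq2 t ht
    rw [hV1] at h1
    rw [hV2] at h2
    have hsθ : HasDerivAt (fun t => sin (θ t)) (cos (θ t) * θ' t) t :=
      (Real.hasDerivAt_sin (θ t)).comp t hb
    have hcθ : HasDerivAt (fun t => cos (θ t)) (-sin (θ t) * θ' t) t :=
      (Real.hasDerivAt_cos (θ t)).comp t hb
    have hsφ : HasDerivAt (fun t => sin (φ t)) (cos (φ t) * φ' t) t :=
      (Real.hasDerivAt_sin (φ t)).comp t ha
    have hcφ : HasDerivAt (fun t => cos (φ t)) (-sin (φ t) * φ' t) t :=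
      (Real.hasDerivAt_cos (φ t)).comp t ha
    have hD : HasDerivAt g
        (φ'' t * sin (θ t) + φ' t * (cos (θ t) * θ' t)
          + (((θ'' t * cos (θ t) + θ' t * (-sin (θ t) * θ' t)) * sin (φ t)
              + θ' t * cos (θ t) * (cos (φ t) * φ' t)) * cos (φ t)
            + θ' t * cos (θ t) * sin (φ t) * (-sin (φ t) * φ' t))) t :=
      (ha'.mul hsθ).add (((hb'.mul hcθ).mul hsφ).mul hcφ)
    convert hD using 1
    have hA : φ'' t = sin (φ t) * cos (φ t) * (θ' t) ^ 2
        - deriv W (cos (θ t) * sin (φ t)) * (cos (θ t) * cos (φ t)) := by linarith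
    have hB : θ'' t = -(2 * (cos (φ t) / sin (φ t)) * θ' t * φ' t)
        - (1 / sin (φ t) ^ 2) * (deriv W (cos (θ t) * sin (φ t)) * (-sin (θ t) * sin (φ t))) := by
      linarith
    rw [hA, hB]
    field_simp
    linear_combination (θ' t * cos (θ t) * φ' t) * sin_sq_add_cos_sq (φ t)
  intro t₁ ht₁ t₂ ht₂
  rcases le_total t₁ t₂ with h | h
  · have hsub : Set.Icc t₁ t₂ ⊆ I := hI.out ht₁ ht₂
    have := constant_of_has_deriv_right_zero
      (f := g) (a := t₁) (b := t₂)
      (fun x hx => ((key x (hsub hx)).continuousAt).continuousWithinAt)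
      (fun x hx => (key x (hsub (Set.mem_Icc_of_Ico hx))).hasDerivWithinAt)
      t₂ (Set.right_mem_Icc.2 h)
    simpa [hg] using this.symm
  · have hsub : Set.Icc t₂ t₁ ⊆ I := hI.out ht₂ ht₁
    have := constant_of_has_deriv_right_zero
      (f := g) (a := t₂) (b := t₁)
      (fun x hx => ((key x (hsub hx)).continuousAt).continuousWithinAt)
      (fun x hx => (key x (hsub (Set.mem_Icc_of_Ico hx))).hasDerivWithinAt)
      t₁ (Set.right_mem_Icc.2 h)
    simpa [hg] using this
end

section
/- Let W : ℝ → ℝ be continuously differentiable, let V(θ,φ) = W(sin θ sin φ), and let (φ, θ) : I → ℝ² be twice differentiable with sin φ(t) ≠ 0, satisfying φ̈ − sin φ cos φ · θ̇² + ∂V/∂φ = 0 and θ̈ + 2(cos φ/sin φ)·θ̇ φ̇ + (1/sin²φ)·∂V/∂θ = 0. Then the function I₂(t) = φ̇ cos θ − θ̇ sin θ sin φ cos φ is constant on I. -/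
open Real

/-- for the potential `V(θ,φ) = W(sin θ sin φ)` on the 2-sphere, the
Noether integral `I₂ = φ̇ cos θ - θ̇ sin θ sin φ cos φ` is conserved. -/
theorem sphere_integral_CK2
    (W : ℝ → ℝ) (hW : ContDiff ℝ 1 W)
    (I : Set ℝ) (hI : I.OrdConnected)
    (φ θ φ' θ' φ'' θ'' : ℝ → ℝ)
    (hφ : ∀ t ∈ I, HasDerivAt φ (φ' t) t)
    (hθ : ∀ t ∈ I, HasDerivAt θ (θ' t) t)
    (hφ' : ∀ t ∈ I, HasDerivAt φ' (φ'' t) t)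
    (hθ' : ∀ t ∈ I, HasDerivAt θ' (θ'' t) t)
    (hsin : ∀ t ∈ I, sin (φ t) ≠ 0)
    (heq1 : ∀ t ∈ I,
      φ'' t - sin (φ t) * cos (φ t) * (θ' t) ^ 2
        + deriv (fun u => W (sin (θ t) * sin u)) (φ t) = 0)
    (heq2 : ∀ t ∈ I,
      θ'' t + 2 * (cos (φ t) / sin (φ t)) * θ' t * φ' t
        + (1 / sin (φ t) ^ 2) * deriv (fun u => W (sin u * sin (φ t))) (θ t) = 0) :
    ∀ t₁ ∈ I, ∀ t₂ ∈ I,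
      φ' t₁ * cos (θ t₁) - θ' t₁ * sin (θ t₁) * sin (φ t₁) * cos (φ t₁)
        = φ' t₂ * cos (θ t₂) - θ' t₂ * sin (θ t₂) * sin (φ t₂) * cos (φ t₂) := by
  have hWd : Differentiable ℝ W := hW.differentiable one_ne_zero
  set g : ℝ → ℝ := fun t =>
    φ' t * cos (θ t) - θ' t * sin (θ t) * sin (φ t) * cos (φ t) with hg
  have hg0 : ∀ t ∈ I, HasDerivAt g 0 t := by
    intro t ht
    have h1 : HasDerivAt (fun u => W (sin (θ t) * sin u))
        (deriv W (sin (θ t) * sin (φ t)) * (sin (θ t) * cos (φ t))) (φ t) :=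
      (hWd _).hasDerivAt.comp _ ((Real.hasDerivAt_sin (φ t)).const_mul (sin (θ t)))
    have h2 : HasDerivAt (fun u => W (sin u * sin (φ t)))
        (deriv W (sin (θ t) * sin (φ t)) * (cos (θ t) * sin (φ t))) (θ t) :=
      (hWd _).hasDerivAt.comp _ ((Real.hasDerivAt_sin (θ t)).mul_const (sin (φ t)))
    have e1 := heq1 t ht; rw [h1.deriv] at e1
    have e2 := heq2 t ht; rw [h2.deriv] at e2
    have hA : HasDerivAt (fun t => φ' t * cos (θ t))
        (φ'' t * cos (θ t) + φ' t * (-sin (θ t) * θ' t)) t :=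
      (hφ' t ht).mul ((hθ t ht).cos)
    have hB : HasDerivAt (fun t => θ' t * sin (θ t) * sin (φ t) * cos (φ t))
        (((θ'' t * sin (θ t) + θ' t * (cos (θ t) * θ' t)) * sin (φ t)
            + θ' t * sin (θ t) * (cos (φ t) * φ' t)) * cos (φ t)
          + θ' t * sin (θ t) * sin (φ t) * (-sin (φ t) * φ' t)) t :=
      (((hθ' t ht).mul ((hθ t ht).sin)).mul ((hφ t ht).sin)).mul ((hφ t ht).cos)
    have key := hA.sub hB
    have hs := hsin t ht
    have hφ''v : φ'' t = sin (φ t) * cos (φ t) * (θ' t) ^ 2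
        - deriv W (sin (θ t) * sin (φ t)) * (sin (θ t) * cos (φ t)) := by linarith
    have hθ''v : θ'' t = -(2 * (cos (φ t) / sin (φ t)) * θ' t * φ' t)
        - (1 / sin (φ t) ^ 2) * (deriv W (sin (θ t) * sin (φ t)) * (cos (θ t) * sin (φ t))) := by
      linarith
    have hz : φ'' t * cos (θ t) + φ' t * (-sin (θ t) * θ' t)
        - (((θ'' t * sin (θ t) + θ' t * (cos (θ t) * θ' t)) * sin (φ t)
            + θ' t * sin (θ t) * (cos (φ t) * φ' t)) * cos (φ t)
          + θ' t * sin (θ t) * sin (φ t) * (-sin (φ t) * φ' t)) = 0 := by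
      rw [hφ''v, hθ''v]
      have hpy := Real.sin_sq_add_cos_sq (φ t)
      field_simp
      linear_combination θ' t * sin (θ t) * φ' t * hpy
    rw [hz] at key
    exact key
  intro t₁ ht₁ t₂ ht₂
  have hconv : Convex ℝ I := convex_iff_ordConnected.mpr hI
  have hdist := hconv.norm_image_sub_le_of_norm_hasFDerivWithin_le
    (f := g) (C := 0)
    (fun x hx => (hg0 x hx).hasFDerivAt.hasFDerivWithinAt)
    (fun x hx => by simp) ht₁ ht₂
  have : g t₂ = g t₁ := by
    have h := hdist
    simp [sub_eq_zero] at h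
    · linarith [h]
  simpa [hg] using this.symm
end

section
/- Let W : ℝ → ℝ be continuously differentiable, let V(θ,φ) = W(cos θ sinh φ), and let (φ, θ) : I → ℝ² be twice differentiable with sinh φ(t) ≠ 0, satisfying the hyperbolic equations of motion φ̈ − sinh φ cosh φ · θ̇² + ∂V/∂φ = 0 and θ̈ + 2(cosh φ/sinh φ)·θ̇ φ̇ + (1/sinh²φ)·∂V/∂θ = 0. Then the function I₁(t) = φ̇ sin θ + θ̇ cos θ sinh φ cosh φ is constant on I. -/
open Real

/-- for the potential `V(θ,φ) = W(cos θ sinh φ)` on the hyperbolic plane,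
the Noether integral `I₁ = φ̇ sin θ + θ̇ cos θ sinh φ cosh φ` is conserved. -/
theorem hyperbolic_integral_CK1
    (W : ℝ → ℝ) (hW : ContDiff ℝ 1 W)
    (I : Set ℝ) (hI : I.OrdConnected)
    (φ θ φ' θ' φ'' θ'' : ℝ → ℝ)
    (hφ : ∀ t ∈ I, HasDerivAt φ (φ' t) t)
    (hθ : ∀ t ∈ I, HasDerivAt θ (θ' t) t)
    (hφ' : ∀ t ∈ I, HasDerivAt φ' (φ'' t) t)
    (hθ' : ∀ t ∈ I, HasDerivAt θ' (θ'' t) t)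
    (hsinh : ∀ t ∈ I, sinh (φ t) ≠ 0)
    (heq1 : ∀ t ∈ I,
      φ'' t - sinh (φ t) * cosh (φ t) * (θ' t) ^ 2
        + deriv (fun u => W (cos (θ t) * sinh u)) (φ t) = 0)
    (heq2 : ∀ t ∈ I,
      θ'' t + 2 * (cosh (φ t) / sinh (φ t)) * θ' t * φ' t
        + (1 / sinh (φ t) ^ 2) * deriv (fun u => W (cos u * sinh (φ t))) (θ t) = 0) :
    ∀ t₁ ∈ I, ∀ t₂ ∈ I,
      φ' t₁ * sin (θ t₁) + θ' t₁ * cos (θ t₁) * sinh (φ t₁) * cosh (φ t₁)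
        = φ' t₂ * sin (θ t₂) + θ' t₂ * cos (θ t₂) * sinh (φ t₂) * cosh (φ t₂) := by
  have hWd : ∀ x, HasDerivAt W (deriv W x) x := fun x =>
    ((hW.differentiable one_ne_zero) x).hasDerivAt
  set g : ℝ → ℝ := fun t =>
    φ' t * sin (θ t) + θ' t * cos (θ t) * sinh (φ t) * cosh (φ t) with hg
  have key : ∀ t ∈ I, HasDerivAt g 0 t := by
    intro t ht
    have h1 := hφ t ht
    have h2 := hθ t ht
    have h3 := hφ' t ht
    have h4 := hθ' t ht
    have hs := hsinh t ht
    have dV1 : deriv (fun u => W (cos (θ t) * sinh u)) (φ t)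
        = deriv W (cos (θ t) * sinh (φ t)) * (cos (θ t) * cosh (φ t)) := by
      have hin : HasDerivAt (fun u => cos (θ t) * sinh u)
          (cos (θ t) * cosh (φ t)) (φ t) := (Real.hasDerivAt_sinh (φ t)).const_mul _
      exact ((hWd _).comp (φ t) hin).deriv
    have dV2 : deriv (fun u => W (cos u * sinh (φ t))) (θ t)
        = deriv W (cos (θ t) * sinh (φ t)) * (-sin (θ t) * sinh (φ t)) := by
      have hin : HasDerivAt (fun u => cos u * sinh (φ t))
          (-sin (θ t) * sinh (φ t)) (θ t) := (Real.hasDerivAt_cos (θ t)).mul_const _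
      exact ((hWd _).comp (θ t) hin).deriv
    have e1 := heq1 t ht
    rw [dV1] at e1
    have e2 := heq2 t ht
    rw [dV2] at e2
    have hsin : HasDerivAt (fun u => sin (θ u)) (cos (θ t) * θ' t) t :=
      (Real.hasDerivAt_sin (θ t)).comp t h2
    have hcos : HasDerivAt (fun u => cos (θ u)) (-sin (θ t) * θ' t) t :=
      (Real.hasDerivAt_cos (θ t)).comp t h2
    have hsh : HasDerivAt (fun u => sinh (φ u)) (cosh (φ t) * φ' t) t :=
      (Real.hasDerivAt_sinh (φ t)).comp t h1
    have hch : HasDerivAt (fun u => cosh (φ u)) (sinh (φ t) * φ' t) t :=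
      (Real.hasDerivAt_cosh (φ t)).comp t h1
    have hD : HasDerivAt g
        ((φ'' t * sin (θ t) + φ' t * (cos (θ t) * θ' t))
          + (((θ'' t * cos (θ t) + θ' t * (-sin (θ t) * θ' t)) * sinh (φ t)
                + θ' t * cos (θ t) * (cosh (φ t) * φ' t)) * cosh (φ t)
              + θ' t * cos (θ t) * sinh (φ t) * (sinh (φ t) * φ' t))) t :=
      (h3.mul hsin).add (((((h4.mul hcos).mul hsh)).mul hch))
    have hzero : (φ'' t * sin (θ t) + φ' t * (cos (θ t) * θ' t))
          + (((θ'' t * cos (θ t) + θ' t * (-sin (θ t) * θ' t)) * sinh (φ t)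
                + θ' t * cos (θ t) * (cosh (φ t) * φ' t)) * cosh (φ t)
              + θ' t * cos (θ t) * sinh (φ t) * (sinh (φ t) * φ' t)) = 0 := by
      have hc : cosh (φ t) ^ 2 - sinh (φ t) ^ 2 = 1 := Real.cosh_sq_sub_sinh_sq _
      have e2' : θ'' t * sinh (φ t) ^ 2 + 2 * cosh (φ t) * sinh (φ t) * θ' t * φ' t
          - deriv W (cos (θ t) * sinh (φ t)) * sin (θ t) * sinh (φ t) = 0 := by
        have hrw : θ'' t * sinh (φ t) ^ 2 + 2 * cosh (φ t) * sinh (φ t) * θ' t * φ' t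
            - deriv W (cos (θ t) * sinh (φ t)) * sin (θ t) * sinh (φ t)
            = sinh (φ t) ^ 2 * (θ'' t + 2 * (cosh (φ t) / sinh (φ t)) * θ' t * φ' t
                + (1 / sinh (φ t) ^ 2) *
                  (deriv W (cos (θ t) * sinh (φ t)) * (-sin (θ t) * sinh (φ t)))) := by
          field_simp
          ring
        rw [hrw, e2, mul_zero]
      have hs2 : sinh (φ t) ^ 2 ≠ 0 := pow_ne_zero _ hs
      have hEs : ((φ'' t * sin (θ t) + φ' t * (cos (θ t) * θ' t))
          + (((θ'' t * cos (θ t) + θ' t * (-sin (θ t) * θ' t)) * sinh (φ t)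
                + θ' t * cos (θ t) * (cosh (φ t) * φ' t)) * cosh (φ t)
              + θ' t * cos (θ t) * sinh (φ t) * (sinh (φ t) * φ' t)))
            * sinh (φ t) ^ 2 = 0 := by
        linear_combination (sin (θ t) * sinh (φ t) ^ 2) * e1
          + (cos (θ t) * cosh (φ t) * sinh (φ t)) * e2'
          - (φ' t * θ' t * cos (θ t) * sinh (φ t) ^ 2) * hc
      exact (mul_eq_zero.mp hEs).resolve_right hs2
    rw [← hzero]
    exact hD
  have main : ∀ a ∈ I, ∀ b ∈ I, a ≤ b → g a = g b := by
    intro a ha b hb hab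
    have hsub : Set.Icc a b ⊆ I := hI.out ha hb
    have := constant_of_has_deriv_right_zero
      (f := g) (a := a) (b := b)
      (fun x hx => ((key x (hsub hx)).continuousAt).continuousWithinAt)
      (fun x hx => ((key x (hsub ⟨hx.1, le_of_lt hx.2⟩)).hasDerivWithinAt))
    exact (this b (Set.right_mem_Icc.mpr hab)).symm
  intro t₁ ht₁ t₂ ht₂
  rcases le_total t₁ t₂ with h | h
  · exact main t₁ ht₁ t₂ ht₂ h
  · exact (main t₂ ht₂ t₁ ht₁ h).symm
end

section
/- Let a, b ∈ ℝ, let W : ℝ → ℝ be continuously differentiable, let V(θ,φ) = W(a cos θ sin φ − b cos φ), and let (φ, θ) : I → ℝ² be twice differentiable with sin φ(t) ≠ 0, satisfying φ̈ − sin φ cos φ · θ̇² + ∂V/∂φ = 0 and θ̈ + 2(cos φ/sin φ)·θ̇ φ̇ + (1/sin²φ)·∂V/∂θ = 0. Then the function a·(φ̇ sin θ + θ̇ cos θ sin φ cos φ) + b·(θ̇ sin²φ) is constant on I. -/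
open Real

/-- for the potential `V(θ,φ) = W(a cos θ sin φ - b cos φ)` on the
2-sphere, the combination `a I₁ + b I₃` of Noether integrals is conserved. -/
theorem sphere_integral_aCK1_bCK3
    (a b : ℝ) (W : ℝ → ℝ) (hW : ContDiff ℝ 1 W)
    (I : Set ℝ) (hI : I.OrdConnected)
    (φ θ φ' θ' φ'' θ'' : ℝ → ℝ)
    (hφ : ∀ t ∈ I, HasDerivAt φ (φ' t) t)
    (hθ : ∀ t ∈ I, HasDerivAt θ (θ' t) t)
    (hφ' : ∀ t ∈ I, HasDerivAt φ' (φ'' t) t)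
    (hθ' : ∀ t ∈ I, HasDerivAt θ' (θ'' t) t)
    (hsin : ∀ t ∈ I, sin (φ t) ≠ 0)
    (heq1 : ∀ t ∈ I,
      φ'' t - sin (φ t) * cos (φ t) * (θ' t) ^ 2
        + deriv (fun u => W (a * cos (θ t) * sin u - b * cos u)) (φ t) = 0)
    (heq2 : ∀ t ∈ I,
      θ'' t + 2 * (cos (φ t) / sin (φ t)) * θ' t * φ' t
        + (1 / sin (φ t) ^ 2)
          * deriv (fun u => W (a * cos u * sin (φ t) - b * cos (φ t))) (θ t) = 0) :
    ∀ t₁ ∈ I, ∀ t₂ ∈ I,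
      a * (φ' t₁ * sin (θ t₁) + θ' t₁ * cos (θ t₁) * sin (φ t₁) * cos (φ t₁))
          + b * (θ' t₁ * sin (φ t₁) ^ 2)
        = a * (φ' t₂ * sin (θ t₂) + θ' t₂ * cos (θ t₂) * sin (φ t₂) * cos (φ t₂))
          + b * (θ' t₂ * sin (φ t₂) ^ 2) := by
  have hWd : ∀ x : ℝ, HasDerivAt W (deriv W x) x := fun x =>
    ((hW.differentiable one_ne_zero) x).hasDerivAt
  set F : ℝ → ℝ := fun t =>
    a * (φ' t * sin (θ t) + θ' t * cos (θ t) * sin (φ t) * cos (φ t))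
      + b * (θ' t * sin (φ t) ^ 2) with hF
  have key : ∀ t ∈ I, HasDerivAt F 0 t := by
    intro t ht
    have hs := hsin t ht
    -- rewrite the potential derivatives
    have hinner1 : HasDerivAt (fun u => a * cos (θ t) * sin u - b * cos u)
        (a * cos (θ t) * cos (φ t) - b * (-sin (φ t))) (φ t) :=
      ((Real.hasDerivAt_sin (φ t)).const_mul (a * cos (θ t))).sub
        ((Real.hasDerivAt_cos (φ t)).const_mul b)
    have hd1 : deriv (fun u => W (a * cos (θ t) * sin u - b * cos u)) (φ t)
        = deriv W (a * cos (θ t) * sin (φ t) - b * cos (φ t))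
            * (a * cos (θ t) * cos (φ t) - b * (-sin (φ t))) :=
      ((hWd _).comp (φ t) hinner1).deriv
    have hinner2 : HasDerivAt (fun u => a * cos u * sin (φ t) - b * cos (φ t))
        (a * (-sin (θ t)) * sin (φ t)) (θ t) := by
      have : HasDerivAt (fun u => a * cos u * sin (φ t))
          (a * (-sin (θ t)) * sin (φ t)) (θ t) :=
        ((Real.hasDerivAt_cos (θ t)).const_mul a).mul_const (sin (φ t))
      simpa using this.sub_const (b * cos (φ t))
    have hd2 : deriv (fun u => W (a * cos u * sin (φ t) - b * cos (φ t))) (θ t)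
        = deriv W (a * cos (θ t) * sin (φ t) - b * cos (φ t))
            * (a * (-sin (θ t)) * sin (φ t)) :=
      ((hWd _).comp (θ t) hinner2).deriv
    have e1 := heq1 t ht
    rw [hd1] at e1
    have e2 := heq2 t ht
    rw [hd2] at e2
    -- multiply e2 by sin^2
    have e2m : θ'' t * sin (φ t) ^ 2 + 2 * cos (φ t) * sin (φ t) * θ' t * φ' t
        - a * sin (θ t) * sin (φ t)
          * deriv W (a * cos (θ t) * sin (φ t) - b * cos (φ t)) = 0 := by
      have h := e2
      field_simp at h
      rw [show sin (φ t) * a * cos (θ t) - cos (φ t) * b = a * cos (θ t) * sin (φ t) - b * cos (φ t) by ring] at h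
      linear_combination (sin (φ t)) * h
    -- derivative of F
    have hsθ := (Real.hasDerivAt_sin (θ t)).comp t (hθ t ht)
    have hcθ := (Real.hasDerivAt_cos (θ t)).comp t (hθ t ht)
    have hsφ := (Real.hasDerivAt_sin (φ t)).comp t (hφ t ht)
    have hcφ := (Real.hasDerivAt_cos (φ t)).comp t (hφ t ht)
    have hA : HasDerivAt (fun s => φ' s * sin (θ s))
        (φ'' t * sin (θ t) + φ' t * (cos (θ t) * θ' t)) t := (hφ' t ht).mul hsθ
    have hB : HasDerivAt (fun s => θ' s * cos (θ s) * sin (φ s) * cos (φ s))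
        (((θ'' t * cos (θ t) + θ' t * (-sin (θ t) * θ' t)) * sin (φ t)
            + θ' t * cos (θ t) * (cos (φ t) * φ' t)) * cos (φ t)
          + θ' t * cos (θ t) * sin (φ t) * (-sin (φ t) * φ' t)) t :=
      (((hθ' t ht).mul hcθ).mul hsφ).mul hcφ
    have hC : HasDerivAt (fun s => θ' s * sin (φ s) ^ 2)
        (θ'' t * sin (φ t) ^ 2
          + θ' t * (2 * sin (φ t) * (cos (φ t) * φ' t))) t := by
      have hp : HasDerivAt (fun s => sin (φ s) ^ 2)
          (2 * sin (φ t) * (cos (φ t) * φ' t)) t := by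
        exact (hsφ.pow 2).congr_deriv (by simp only [Function.comp_apply]; norm_num)
      exact (hθ' t ht).mul hp
    have hD : HasDerivAt F
        (a * ((φ'' t * sin (θ t) + φ' t * (cos (θ t) * θ' t))
            + (((θ'' t * cos (θ t) + θ' t * (-sin (θ t) * θ' t)) * sin (φ t)
                + θ' t * cos (θ t) * (cos (φ t) * φ' t)) * cos (φ t)
              + θ' t * cos (θ t) * sin (φ t) * (-sin (φ t) * φ' t)))
          + b * (θ'' t * sin (φ t) ^ 2
            + θ' t * (2 * sin (φ t) * (cos (φ t) * φ' t)))) t :=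
      ((hA.add hB).const_mul a).add (hC.const_mul b)
    have hpyth : sin (φ t) ^ 2 + cos (φ t) ^ 2 = 1 := sin_sq_add_cos_sq (φ t)
    have hzero : (a * ((φ'' t * sin (θ t) + φ' t * (cos (θ t) * θ' t))
            + (((θ'' t * cos (θ t) + θ' t * (-sin (θ t) * θ' t)) * sin (φ t)
                + θ' t * cos (θ t) * (cos (φ t) * φ' t)) * cos (φ t)
              + θ' t * cos (θ t) * sin (φ t) * (-sin (φ t) * φ' t)))
          + b * (θ'' t * sin (φ t) ^ 2
            + θ' t * (2 * sin (φ t) * (cos (φ t) * φ' t)))) = 0 := by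
      have hmul : (a * ((φ'' t * sin (θ t) + φ' t * (cos (θ t) * θ' t))
            + (((θ'' t * cos (θ t) + θ' t * (-sin (θ t) * θ' t)) * sin (φ t)
                + θ' t * cos (θ t) * (cos (φ t) * φ' t)) * cos (φ t)
              + θ' t * cos (θ t) * sin (φ t) * (-sin (φ t) * φ' t)))
          + b * (θ'' t * sin (φ t) ^ 2
            + θ' t * (2 * sin (φ t) * (cos (φ t) * φ' t)))) * sin (φ t) = 0 := by
        linear_combination (a * sin (θ t) * sin (φ t)) * e1
          + (a * cos (θ t) * cos (φ t) + b * sin (φ t)) * e2m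
          + (-(a * cos (θ t) * sin (φ t) * θ' t * φ' t)) * hpyth
      exact (mul_eq_zero.mp hmul).resolve_right hs
    exact hzero ▸ hD
  intro t₁ ht₁ t₂ ht₂
  have hC : ∀ x ∈ I, ∀ y ∈ I, F x = F y := by
    intro x hx y hy
    have := hI.convex.norm_image_sub_le_of_norm_hasDerivWithin_le (C := 0)
      (f := F) (f' := fun _ => 0)
      (fun z hz => (key z hz).hasDerivWithinAt)
      (fun z _ => by simp) hx hy
    have h0 : ‖F y - F x‖ ≤ 0 := by simpa using this
    exact (sub_eq_zero.mp (norm_le_zero_iff.mp h0)).symm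
  exact hC t₁ ht₁ t₂ ht₂
end

section
/- Let V : ℝ² → ℝ, (θ,φ) ↦ V(θ,φ), be continuously differentiable, let p ∈ ℝ, and suppose that sin θ · ∂V/∂φ + cos θ (cos φ/sin φ) · ∂V/∂θ + p = 0 wherever sin φ ≠ 0. Then for every twice differentiable solution (φ, θ) : I → ℝ² with sin φ(t) ≠ 0 of the equations φ̈ − sin φ cos φ · θ̇² + ∂V/∂φ = 0 and θ̈ + 2(cos φ/sin φ)·θ̇ φ̇ + (1/sin²φ)·∂V/∂θ = 0, the function t ↦ −(φ̇ sin θ + θ̇ cos θ sin φ cos φ) + p t is constant on I. -/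
open Real

/-- if `sin θ V_φ + cos θ (cos φ / sin φ) V_θ + p = 0` wherever
`sin φ ≠ 0`, then along any solution of the equations of motion on the 2-sphere with
potential `V(θ,φ)`, the time-dependent first integral
`-(φ̇ sin θ + θ̇ cos θ sin φ cos φ) + p t` is constant. -/
theorem sphere_noether_integral_CK1_gauge
    (V : ℝ × ℝ → ℝ) (hV : ContDiff ℝ 1 V) (p : ℝ)
    (hcond : ∀ Θ Φ : ℝ, sin Φ ≠ 0 →
      sin Θ * fderiv ℝ V (Θ, Φ) (0, 1)
        + cos Θ * (cos Φ / sin Φ) * fderiv ℝ V (Θ, Φ) (1, 0) + p = 0)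
    (I : Set ℝ) (hI : I.OrdConnected)
    (φ θ φ' θ' φ'' θ'' : ℝ → ℝ)
    (hφ : ∀ t ∈ I, HasDerivAt φ (φ' t) t)
    (hθ : ∀ t ∈ I, HasDerivAt θ (θ' t) t)
    (hφ' : ∀ t ∈ I, HasDerivAt φ' (φ'' t) t)
    (hθ' : ∀ t ∈ I, HasDerivAt θ' (θ'' t) t)
    (hsin : ∀ t ∈ I, sin (φ t) ≠ 0)
    (heq1 : ∀ t ∈ I,
      φ'' t - sin (φ t) * cos (φ t) * (θ' t) ^ 2
        + fderiv ℝ V (θ t, φ t) (0, 1) = 0)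
    (heq2 : ∀ t ∈ I,
      θ'' t + 2 * (cos (φ t) / sin (φ t)) * θ' t * φ' t
        + (1 / sin (φ t) ^ 2) * fderiv ℝ V (θ t, φ t) (1, 0) = 0) :
    ∀ t₁ ∈ I, ∀ t₂ ∈ I,
      -(φ' t₁ * sin (θ t₁) + θ' t₁ * cos (θ t₁) * sin (φ t₁) * cos (φ t₁)) + p * t₁
        = -(φ' t₂ * sin (θ t₂) + θ' t₂ * cos (θ t₂) * sin (φ t₂) * cos (φ t₂)) + p * t₂ := by
  intro t₁ ht₁ t₂ ht₂
  set F : ℝ → ℝ := fun t =>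
    -(φ' t * sin (θ t) + θ' t * cos (θ t) * sin (φ t) * cos (φ t)) + p * t with hF
  have hconv : Convex ℝ I := hI.convex
  have key : ∀ t ∈ I, HasDerivWithinAt F 0 I t := by
    intro t ht
    have hs := hsin t ht
    have hst : HasDerivAt (fun u => sin (θ u)) (cos (θ t) * θ' t) t :=
      (Real.hasDerivAt_sin (θ t)).comp t (hθ t ht)
    have hct : HasDerivAt (fun u => cos (θ u)) (-sin (θ t) * θ' t) t :=
      (Real.hasDerivAt_cos (θ t)).comp t (hθ t ht)
    have hsp : HasDerivAt (fun u => sin (φ u)) (cos (φ t) * φ' t) t :=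
      (Real.hasDerivAt_sin (φ t)).comp t (hφ t ht)
    have hcp : HasDerivAt (fun u => cos (φ u)) (-sin (φ t) * φ' t) t :=
      (Real.hasDerivAt_cos (φ t)).comp t (hφ t ht)
    have hD : HasDerivAt F
        (-( (φ'' t * sin (θ t) + φ' t * (cos (θ t) * θ' t))
          + ((( θ'' t * cos (θ t) + θ' t * (-sin (θ t) * θ' t)) * sin (φ t)
              + θ' t * cos (θ t) * (cos (φ t) * φ' t)) * cos (φ t)
            + θ' t * cos (θ t) * sin (φ t) * (-sin (φ t) * φ' t))) + p * 1) t := by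
      exact ((((hφ' t ht).mul hst).add
        ((((hθ' t ht).mul hct).mul hsp).mul hcp)).neg).add ((hasDerivAt_id t).const_mul p)
    have e1 := heq1 t ht
    have e2 := heq2 t ht
    have hc := hcond (θ t) (φ t) hs
    have hpy := sin_sq_add_cos_sq (φ t)
    have hφ'' : φ'' t = sin (φ t) * cos (φ t) * (θ' t) ^ 2
        - fderiv ℝ V (θ t, φ t) (0, 1) := by linarith
    have hθ'' : θ'' t = -(2 * (cos (φ t) / sin (φ t)) * θ' t * φ' t)
        - (1 / sin (φ t) ^ 2) * fderiv ℝ V (θ t, φ t) (1, 0) := by linarith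
    have hzero : (-( (φ'' t * sin (θ t) + φ' t * (cos (θ t) * θ' t))
          + ((( θ'' t * cos (θ t) + θ' t * (-sin (θ t) * θ' t)) * sin (φ t)
              + θ' t * cos (θ t) * (cos (φ t) * φ' t)) * cos (φ t)
            + θ' t * cos (θ t) * sin (φ t) * (-sin (φ t) * φ' t))) + p * 1) = 0 := by
      rw [hφ'', hθ'']
      have hc' := hc
      field_simp at hc' ⊢
      linear_combination hc'
        + sin (φ t) * cos (θ t) * θ' t * φ' t * hpy
    rw [hzero] at hD
    exact hD.hasDerivWithinAt
  have h := hconv.norm_image_sub_le_of_norm_hasDerivWithin_le (C := 0) key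
    (fun x hx => by simp) ht₁ ht₂
  have h2 : ‖F t₂ - F t₁‖ ≤ 0 := by simpa using h
  have h3 : F t₂ - F t₁ = 0 := norm_le_zero_iff.mp h2
  have h4 : F t₁ = F t₂ := by linarith
  simpa only [hF] using h4
end
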